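/- arXiv:2106.12655 — 6 statements merged into one kernel-verified Lean document; each statement's English description precedes it below -/
import Mathlib

section
/- Let γ₁, γ₂ : [0,1] → ℝ³ be continuous curves with partitions 0 = t₀ < t₁ < ⋯ < t_m = 1 and 0 = u₀ < u₁ < ⋯ < u_n = 1, and suppose there are convex sets C₁,…,C_m and D₁,…,D_n in ℝ³ such that γ₁([t_{k−1}, t_k]) ⊆ C_k for each k, γ₂([u_{l−1}, u_l]) ⊆ D_l for each l, and C_k ∩ D_l = ∅ for all k, l. Let P₁ be the inscribed polyline of γ₁ (the piecewise-linear curve agreeing with γ₁ at each t_k and affine on each [t_{k−1}, t_k]), and P₂ the inscribed polyline of γ₂ on its partition. Define the straight-line homotopies H₁(s,t) = (1−s)•γ₁(t) + s•P₁(t) and H₂(s,t) = (1−s)•γ₂(t) + s•P₂(t). Then for all s ∈ [0,1] and all t, t' ∈ [0,1], H₁(s,t) ≠ H₂(s,t'); in particular the two curves are deformed into their polylines without ever crossing each other. -/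
/-- Find a subinterval containing x. -/
lemma find_interval (m : ℕ) (hm : 0 < m) (t : ℕ → ℝ)
    (ht0 : t 0 = 0) (htm : t m = 1) (x : ℝ) (hx : x ∈ Set.Icc (0:ℝ) 1) :
    ∃ k < m, x ∈ Set.Icc (t k) (t (k + 1)) := by
  classical
  have h0 : t 0 ≤ x := by rw [ht0]; exact hx.1
  -- largest k < m with t k ≤ x
  let S := (Finset.range m).filter (fun k => t k ≤ x)
  have hS : S.Nonempty := ⟨0, by simp [S, hm, h0]⟩
  obtain ⟨k, hkS, hkmax⟩ := S.exists_max_image id hS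
  simp only [S, Finset.mem_filter, Finset.mem_range] at hkS
  refine ⟨k, hkS.1, hkS.2, ?_⟩
  by_cases h : k + 1 = m
  · rw [h, htm]; exact hx.2
  · have hk1 : k + 1 < m := lt_of_le_of_ne hkS.1 h
    by_contra hlt
    push_neg at hlt
    have : k + 1 ∈ S := by simp [S, hk1, le_of_lt hlt]
    have h2 := hkmax _ this
    simp only [id] at h2
    omega

lemma in_hull (m : ℕ) (γ : ℝ → EuclideanSpace ℝ (Fin 3)) (t : ℕ → ℝ)
    (htmono : ∀ k < m, t k < t (k + 1))
    (C : ℕ → Set (EuclideanSpace ℝ (Fin 3)))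
    (hCconv : ∀ k < m, Convex ℝ (C k))
    (hγC : ∀ k < m, γ '' Set.Icc (t k) (t (k + 1)) ⊆ C k)
    (P : ℝ → EuclideanSpace ℝ (Fin 3))
    (hP : ∀ k < m, ∀ x ∈ Set.Icc (t k) (t (k + 1)),
      P x = γ (t k) + ((x - t k) / (t (k + 1) - t k)) • (γ (t (k + 1)) - γ (t k)))
    (k : ℕ) (hk : k < m) (x : ℝ) (hx : x ∈ Set.Icc (t k) (t (k + 1)))
    (s : ℝ) (hs : s ∈ Set.Icc (0:ℝ) 1) :
    (1 - s) • γ x + s • P x ∈ C k := by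
  have hγx : γ x ∈ C k := hγC k hk ⟨x, hx, rfl⟩
  have ha : γ (t k) ∈ C k := hγC k hk ⟨t k, ⟨le_refl _, (htmono k hk).le⟩, rfl⟩
  have hb : γ (t (k+1)) ∈ C k := hγC k hk ⟨t (k+1), ⟨(htmono k hk).le, le_refl _⟩, rfl⟩
  have hd : (0:ℝ) < t (k+1) - t k := sub_pos.2 (htmono k hk)
  set c : ℝ := (x - t k) / (t (k + 1) - t k) with hc
  have hc0 : 0 ≤ c := div_nonneg (sub_nonneg.2 hx.1) hd.le
  have hc1 : c ≤ 1 := by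
    rw [hc, div_le_one hd]; linarith [hx.2]
  have hPx : P x ∈ C k := by
    rw [hP k hk x hx]
    have := (hCconv k hk) ha hb (by linarith : (0:ℝ) ≤ 1 - c) hc0 (by ring)
    convert this using 1
    module
  have := (hCconv k hk) hγx hPx (by linarith [hs.2] : (0:ℝ) ≤ 1 - s) hs.1 (by ring)
  convert this using 2

/-- **Discretization into inscribed polylines of two curves with pairwise disjoint
convex bounding volumes never crosses.** If `γ₁`, `γ₂` are continuous curves on `[0,1]`
with partitions `t`, `u`, convex sets `C k ⊇ γ₁ [t k, t (k+1)]` and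
`D l ⊇ γ₂ [u l, u (l+1)]` with every `C k` disjoint from every `D l`, and `P₁`, `P₂` are
the inscribed polylines (affine on each subinterval, agreeing with the curves at the
partition points), then the straight-line homotopies `H i (s, x) = (1-s) • γ i x + s • P i x`
never intersect each other: `H₁ (s, x) ≠ H₂ (s, x')` for all `s, x, x' ∈ [0,1]`. -/
theorem stmt_1 (m n : ℕ) (hm : 0 < m) (hn : 0 < n)
    (γ₁ γ₂ : ℝ → EuclideanSpace ℝ (Fin 3))
    (hγ₁ : ContinuousOn γ₁ (Set.Icc 0 1)) (hγ₂ : ContinuousOn γ₂ (Set.Icc 0 1))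
    (t u : ℕ → ℝ)
    (ht0 : t 0 = 0) (htm : t m = 1) (htmono : ∀ k < m, t k < t (k + 1))
    (hu0 : u 0 = 0) (hun : u n = 1) (humono : ∀ l < n, u l < u (l + 1))
    (C D : ℕ → Set (EuclideanSpace ℝ (Fin 3)))
    (hCconv : ∀ k < m, Convex ℝ (C k)) (hDconv : ∀ l < n, Convex ℝ (D l))
    (hγ₁C : ∀ k < m, γ₁ '' Set.Icc (t k) (t (k + 1)) ⊆ C k)
    (hγ₂D : ∀ l < n, γ₂ '' Set.Icc (u l) (u (l + 1)) ⊆ D l)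
    (hdisj : ∀ k < m, ∀ l < n, C k ∩ D l = ∅)
    (P₁ P₂ : ℝ → EuclideanSpace ℝ (Fin 3))
    (hP₁ : ∀ k < m, ∀ x ∈ Set.Icc (t k) (t (k + 1)),
      P₁ x = γ₁ (t k) + ((x - t k) / (t (k + 1) - t k)) • (γ₁ (t (k + 1)) - γ₁ (t k)))
    (hP₂ : ∀ l < n, ∀ x ∈ Set.Icc (u l) (u (l + 1)),
      P₂ x = γ₂ (u l) + ((x - u l) / (u (l + 1) - u l)) • (γ₂ (u (l + 1)) - γ₂ (u l))) :
    ∀ s ∈ Set.Icc (0:ℝ) 1, ∀ x ∈ Set.Icc (0:ℝ) 1, ∀ x' ∈ Set.Icc (0:ℝ) 1,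
      (1 - s) • γ₁ x + s • P₁ x ≠ (1 - s) • γ₂ x' + s • P₂ x' := by
  intro s hs x hx x' hx'
  obtain ⟨k, hk, hxk⟩ := find_interval m hm t ht0 htm x hx
  obtain ⟨l, hl, hxl⟩ := find_interval n hn u hu0 hun x' hx'
  have h1 := in_hull m γ₁ t htmono C hCconv hγ₁C P₁ hP₁ k hk x hxk s hs
  have h2 := in_hull n γ₂ u humono D hDconv hγ₂D P₂ hP₂ l hl x' hxl s hs
  intro heq
  have : (1 - s) • γ₂ x' + s • P₂ x' ∈ C k ∩ D l := ⟨heq ▸ h1, h2⟩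
  rw [hdisj k hk l hl] at this
  exact this
end

section
/- For a nonempty bounded set S ⊆ ℝ³ (EuclideanSpace ℝ (Fin 3)), define its tight axis-aligned bounding box AABB(S) = {x ∈ ℝ³ | ∀ i ∈ Fin 3, sInf {p i | p ∈ S} ≤ x i ∧ x i ≤ sSup {p i | p ∈ S}}. Then Metric.diam (AABB(S)) ≤ √3 · Metric.diam S. -/
/-- The tight axis-aligned bounding box of a set `S ⊆ ℝ³`: the set of points whose
`i`-th coordinate lies between the infimum and the supremum of the `i`-th coordinates
of points of `S`, for every `i`. -/
def aabb (S : Set (EuclideanSpace ℝ (Fin 3))) : Set (EuclideanSpace ℝ (Fin 3)) :=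
  {x | ∀ i : Fin 3,
    sInf ((fun p : EuclideanSpace ℝ (Fin 3) => p i) '' S) ≤ x i ∧
    x i ≤ sSup ((fun p : EuclideanSpace ℝ (Fin 3) => p i) '' S)}

/-- **The diameter of the tight axis-aligned bounding box of a nonempty bounded set
`S ⊆ ℝ³` is at most `√3` times the diameter of `S`.** -/
theorem stmt_4 (S : Set (EuclideanSpace ℝ (Fin 3))) (hne : S.Nonempty)
    (hbdd : Bornology.IsBounded S) :
    Metric.diam (aabb S) ≤ Real.sqrt 3 * Metric.diam S := by
  set d := Metric.diam S with hd
  have hd0 : 0 ≤ d := Metric.diam_nonneg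
  -- coordinate distance bound
  have hcoord : ∀ (p q : EuclideanSpace ℝ (Fin 3)) (i : Fin 3),
      dist (p i) (q i) ≤ dist p q := by
    intro p q i
    calc dist (p i) (q i) = Real.sqrt (dist (p i) (q i) ^ 2) := by
          rw [Real.sqrt_sq dist_nonneg]
      _ ≤ Real.sqrt (∑ j, dist (p j) (q j) ^ 2) := by
          apply Real.sqrt_le_sqrt
          exact Finset.single_le_sum (f := fun j => dist (p j) (q j) ^ 2)
            (fun j _ => sq_nonneg _) (Finset.mem_univ i)
      _ = dist p q := (EuclideanSpace.dist_eq p q).symm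
  obtain ⟨p₀, hp₀⟩ := hne
  have hsub : ∀ i : Fin 3, ((fun p : EuclideanSpace ℝ (Fin 3) => p i) '' S)
      ⊆ Set.Icc (p₀ i - d) (p₀ i + d) := by
    rintro i a ⟨q, hq, rfl⟩
    have h1 : dist (q i) (p₀ i) ≤ d :=
      (hcoord q p₀ i).trans (Metric.dist_le_diam_of_mem hbdd hq hp₀)
    rw [Real.dist_eq, abs_le] at h1
    constructor <;> linarith [h1.1, h1.2]
  have hbddA : ∀ i : Fin 3, BddAbove ((fun p : EuclideanSpace ℝ (Fin 3) => p i) '' S) :=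
    fun i => (bddAbove_Icc).mono (hsub i)
  have hbddB : ∀ i : Fin 3, BddBelow ((fun p : EuclideanSpace ℝ (Fin 3) => p i) '' S) :=
    fun i => (bddBelow_Icc).mono (hsub i)
  have key : ∀ i : Fin 3,
      sSup ((fun p : EuclideanSpace ℝ (Fin 3) => p i) '' S)
        ≤ sInf ((fun p : EuclideanSpace ℝ (Fin 3) => p i) '' S) + d := by
    intro i
    apply csSup_le (Set.Nonempty.image _ ⟨p₀, hp₀⟩)
    rintro a ⟨p, hp, rfl⟩
    have h1 : p i - d ≤ sInf ((fun p : EuclideanSpace ℝ (Fin 3) => p i) '' S) := by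
      apply le_csInf (Set.Nonempty.image _ ⟨p₀, hp₀⟩)
      rintro b ⟨q, hq, rfl⟩
      have h2 : dist (p i) (q i) ≤ d :=
        (hcoord p q i).trans (Metric.dist_le_diam_of_mem hbdd hp hq)
      rw [Real.dist_eq, abs_le] at h2
      linarith [h2.1]
    linarith
  -- now bound the diameter of the box
  apply Metric.diam_le_of_forall_dist_le (by positivity)
  intro x hx y hy
  have hxy : ∀ i : Fin 3, dist (x i) (y i) ≤ d := by
    intro i
    have hxi := hx i
    have hyi := hy i
    rw [Real.dist_eq, abs_le]
    have := key i
    constructor <;> linarith [hxi.1, hxi.2, hyi.1, hyi.2]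
  rw [EuclideanSpace.dist_eq]
  have hsum : ∑ i, dist (x i) (y i) ^ 2 ≤ 3 * d ^ 2 := by
    have : ∀ i : Fin 3, dist (x i) (y i) ^ 2 ≤ d ^ 2 := fun i =>
      pow_le_pow_left₀ dist_nonneg (hxy i) 2
    calc ∑ i, dist (x i) (y i) ^ 2 ≤ ∑ _i : Fin 3, d ^ 2 :=
          Finset.sum_le_sum fun i _ => this i
      _ = 3 * d ^ 2 := by simp [Finset.sum_const]
  calc Real.sqrt (∑ i, dist (x i) (y i) ^ 2) ≤ Real.sqrt (3 * d ^ 2) :=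
        Real.sqrt_le_sqrt hsum
    _ = Real.sqrt 3 * d := by
        rw [Real.sqrt_mul (by norm_num), Real.sqrt_sq hd0]
end

section
/- Let γ₁, γ₂ : ℝ → ℝ³ (EuclideanSpace ℝ (Fin 3)) be Lipschitz with constant M > 0 on [0,1], and suppose there is d > 0 with dist(γ₁(s), γ₂(t)) ≥ d for all s, t ∈ [0,1] (the two curves are separated by distance d). Let [a₁,b₁] ⊆ [0,1] and [a₂,b₂] ⊆ [0,1] be subintervals. If √3 · M · ((b₁−a₁) + (b₂−a₂)) < d, then the tight axis-aligned bounding boxes AABB(γ₁([a₁,b₁])) and AABB(γ₂([a₂,b₂])) are disjoint. -/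
lemma coord_abs_le_dist (x y : EuclideanSpace ℝ (Fin 3)) (i : Fin 3) :
    |x i - y i| ≤ dist x y := by
  rw [EuclideanSpace.dist_eq, ← Real.sqrt_sq_eq_abs]
  apply Real.sqrt_le_sqrt
  have := Finset.single_le_sum (f := fun j => dist (x j) (y j) ^ 2)
    (fun j _ => sq_nonneg _) (Finset.mem_univ i)
  simpa [Real.dist_eq, sq_abs] using this

lemma aabb_coord (γ : ℝ → EuclideanSpace ℝ (Fin 3)) (M a b : ℝ) (hM : 0 ≤ M)
    (hLip : ∀ s ∈ Set.Icc (0:ℝ) 1, ∀ t ∈ Set.Icc (0:ℝ) 1,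
      dist (γ s) (γ t) ≤ M * |s - t|)
    (hab : a ≤ b) (hsub : Set.Icc a b ⊆ Set.Icc 0 1)
    (x : EuclideanSpace ℝ (Fin 3)) (hx : x ∈ aabb (γ '' Set.Icc a b)) (i : Fin 3) :
    |x i - γ a i| ≤ M * (b - a) := by
  set S' := (fun p : EuclideanSpace ℝ (Fin 3) => p i) '' (γ '' Set.Icc a b) with hS'
  have ha : a ∈ Set.Icc a b := ⟨le_refl a, hab⟩
  have hne : (γ a i) ∈ S' := ⟨γ a, ⟨a, ha, rfl⟩, rfl⟩
  have hbound : ∀ u ∈ S', |u - γ a i| ≤ M * (b - a) := by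
    rintro u ⟨p, ⟨s, hs, rfl⟩, rfl⟩
    calc |γ s i - γ a i| ≤ dist (γ s) (γ a) := coord_abs_le_dist _ _ i
      _ ≤ M * |s - a| := hLip s (hsub hs) a (hsub ha)
      _ ≤ M * (b - a) := by
          apply mul_le_mul_of_nonneg_left _ hM
          rw [abs_sub_le_iff]; constructor <;> linarith [hs.1, hs.2]
  have h1 : γ a i - M * (b - a) ≤ sInf S' :=
    le_csInf ⟨_, hne⟩ fun u hu => by
      have := (abs_sub_le_iff.mp (hbound u hu)).2; linarith
  have h2 : sSup S' ≤ γ a i + M * (b - a) :=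
    csSup_le ⟨_, hne⟩ fun u hu => by
      have := (abs_sub_le_iff.mp (hbound u hu)).1; linarith
  have hxi := hx i
  rw [abs_sub_le_iff]
  exact ⟨by linarith [hxi.2], by linarith [hxi.1]⟩

/-- **Sufficiently subdivided pieces of two separated Lipschitz curves have disjoint
tight axis-aligned bounding boxes.** If `γ₁, γ₂` are `M`-Lipschitz on `[0,1]` and
separated by distance `d > 0`, and `[a₁,b₁], [a₂,b₂] ⊆ [0,1]` are subintervals with
`√3 * M * ((b₁ - a₁) + (b₂ - a₂)) < d`, then the tight AABBs of `γ₁ '' [a₁,b₁]` and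
`γ₂ '' [a₂,b₂]` are disjoint. -/
theorem stmt_5 (γ₁ γ₂ : ℝ → EuclideanSpace ℝ (Fin 3)) (M d : ℝ) (hM : 0 < M) (hd : 0 < d)
    (hLip₁ : ∀ s ∈ Set.Icc (0:ℝ) 1, ∀ t ∈ Set.Icc (0:ℝ) 1,
      dist (γ₁ s) (γ₁ t) ≤ M * |s - t|)
    (hLip₂ : ∀ s ∈ Set.Icc (0:ℝ) 1, ∀ t ∈ Set.Icc (0:ℝ) 1,
      dist (γ₂ s) (γ₂ t) ≤ M * |s - t|)
    (hsep : ∀ s ∈ Set.Icc (0:ℝ) 1, ∀ t ∈ Set.Icc (0:ℝ) 1, d ≤ dist (γ₁ s) (γ₂ t))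
    (a₁ b₁ a₂ b₂ : ℝ) (hab₁ : a₁ ≤ b₁) (hab₂ : a₂ ≤ b₂)
    (hsub₁ : Set.Icc a₁ b₁ ⊆ Set.Icc 0 1) (hsub₂ : Set.Icc a₂ b₂ ⊆ Set.Icc 0 1)
    (hsmall : Real.sqrt 3 * M * ((b₁ - a₁) + (b₂ - a₂)) < d) :
    aabb (γ₁ '' Set.Icc a₁ b₁) ∩ aabb (γ₂ '' Set.Icc a₂ b₂) = ∅ := by
  by_contra h
  obtain ⟨x, hx₁, hx₂⟩ := Set.nonempty_iff_ne_empty.mpr h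
  set c : ℝ := M * (b₁ - a₁) + M * (b₂ - a₂) with hc
  have hc0 : 0 ≤ c := add_nonneg (mul_nonneg hM.le (by linarith)) (mul_nonneg hM.le (by linarith))
  have hkey : ∀ i : Fin 3, |γ₁ a₁ i - γ₂ a₂ i| ≤ c := by
    intro i
    have h1 := aabb_coord γ₁ M a₁ b₁ hM.le hLip₁ hab₁ hsub₁ x hx₁ i
    have h2 := aabb_coord γ₂ M a₂ b₂ hM.le hLip₂ hab₂ hsub₂ x hx₂ i
    calc |γ₁ a₁ i - γ₂ a₂ i| ≤ |γ₁ a₁ i - x i| + |x i - γ₂ a₂ i| := abs_sub_le _ _ _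
      _ = |x i - γ₁ a₁ i| + |x i - γ₂ a₂ i| := by rw [abs_sub_comm (γ₁ a₁ i)]
      _ ≤ c := add_le_add h1 h2
  have hdist : dist (γ₁ a₁) (γ₂ a₂) ≤ Real.sqrt 3 * c := by
    rw [EuclideanSpace.dist_eq]
    have hsum : ∑ j : Fin 3, dist (γ₁ a₁ j) (γ₂ a₂ j) ^ 2 ≤ 3 * c ^ 2 := by
      have : ∀ j : Fin 3, dist (γ₁ a₁ j) (γ₂ a₂ j) ^ 2 ≤ c ^ 2 := fun j => by
        rw [Real.dist_eq, sq_abs]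
        exact sq_le_sq' (abs_le.mp (hkey j)).1 (abs_le.mp (hkey j)).2
      calc ∑ j : Fin 3, dist (γ₁ a₁ j) (γ₂ a₂ j) ^ 2 ≤ ∑ _j : Fin 3, c ^ 2 :=
            Finset.sum_le_sum fun j _ => this j
        _ = 3 * c ^ 2 := by simp [Finset.sum_const]
    calc Real.sqrt (∑ j : Fin 3, dist (γ₁ a₁ j) (γ₂ a₂ j) ^ 2)
        ≤ Real.sqrt (3 * c ^ 2) := Real.sqrt_le_sqrt hsum
      _ = Real.sqrt 3 * c := by
          rw [Real.sqrt_mul (by norm_num), Real.sqrt_sq hc0]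
  have ha₁ := hsub₁ ⟨le_refl a₁, hab₁⟩
  have ha₂ := hsub₂ ⟨le_refl a₂, hab₂⟩
  have := hsep a₁ ha₁ a₂ ha₂
  have : d ≤ Real.sqrt 3 * c := le_trans this hdist
  have : Real.sqrt 3 * c = Real.sqrt 3 * M * ((b₁ - a₁) + (b₂ - a₂)) := by rw [hc]; ring
  linarith
end

section
/- Let F : ℝ³ → ℝ³ be the gradient field of the Laplace Green's function, F(x) = (4π)⁻¹ · ‖x‖⁻³ • x, on ℝ³ = EuclideanSpace ℝ (Fin 3). Fix y ∈ ℝ³ and let x ≠ 0. Then the map x ↦ (fderiv ℝ F x) y is differentiable at x, and for all z ∈ ℝ³ its derivative applied to z equals (4π)⁻¹ • ( −3‖x‖⁻⁵ • ( ⟪y,z⟫ • x + ⟪x,z⟫ • y + ⟪x,y⟫ • z ) + (15 · ⟪x,y⟫ · ⟪x,z⟫ · ‖x‖⁻⁷) • x ). (This is the third derivative tensor ∇³G(x) = [−3 Σᵢ (x⊗eᵢ⊗eᵢ + eᵢ⊗x⊗eᵢ + eᵢ⊗eᵢ⊗x)]/(4π‖x‖⁵) + 15 x⊗x⊗x/(4π‖x‖⁷).)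 -/
/-!
Away from the origin, `w ↦ DF(w) y` is the explicit field
`c‖w‖⁻³ • y - 3c⟪w, y⟫‖w‖⁻⁵ • w`, which is differentiated by the product rule, using
`D(‖w‖⁻ᵏ) = -k‖w‖⁻ᵏ⁻² ⟪w, ·⟫`; the two functions agree near `x ≠ 0`, so their derivatives
at `x` coincide.
-/

open scoped RealInnerProductSpace Topology

variable {E : Type*} [NormedAddCommGroup E] [InnerProductSpace ℝ E] {x : E}

theorem hasFDerivAt_norm_of_ne_zero (hx : x ≠ 0) :
    HasFDerivAt (‖·‖) (‖x‖⁻¹ • innerSL ℝ x) x := by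
  have h := (hasStrictFDerivAt_norm_sq x).hasFDerivAt.sqrt (pow_ne_zero 2 (norm_ne_zero_iff.2 hx))
  simp only [Real.sqrt_sq (norm_nonneg _)] at h
  convert h using 1
  ext v
  simp only [smul_apply, coe_innerSL_apply, smul_eq_mul, nsmul_eq_mul, Nat.cast_ofNat]
  field_simp

theorem hasFDerivAt_inv_norm_pow (k : ℕ) (hx : x ≠ 0) :
    HasFDerivAt (fun w : E => (‖w‖ ^ k)⁻¹) ((-k * (‖x‖ ^ (k + 2))⁻¹) • innerSL ℝ x) x := by
  have hn : ‖x‖ ≠ 0 := norm_ne_zero_iff.2 hx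
  have h := ((hasDerivAt_pow k ‖x‖).inv (pow_ne_zero k hn)).comp_hasFDerivAt x
    (hasFDerivAt_norm_of_ne_zero hx)
  refine h.congr_fderiv ?_
  rw [smul_smul]
  congr 1
  cases k with
  | zero => simp
  | succ m => rw [Nat.add_sub_cancel]; field_simp; ring

noncomputable def inverseSquareField (c : ℝ) (v : E) : E := (c * (‖v‖ ^ 3)⁻¹) • v

theorem hasFDerivAt_inverseSquareField (c : ℝ) (hx : x ≠ 0) :
    HasFDerivAt (inverseSquareField c)
      ((c * (‖x‖ ^ 3)⁻¹) • ContinuousLinearMap.id ℝ E +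
        ((-3 * c * (‖x‖ ^ 5)⁻¹) • innerSL ℝ x).smulRight x) x := by
  have h := ((hasFDerivAt_inv_norm_pow 3 hx).const_mul c).smul (hasFDerivAt_id x)
  refine h.congr_fderiv ?_
  ext v
  simp only [add_apply, smul_apply, ContinuousLinearMap.id_apply, id_eq, Nat.cast_ofNat,
    ContinuousLinearMap.smulRight_apply, coe_innerSL_apply, smul_eq_mul]
  module

theorem fderiv_inverseSquareField_apply (c : ℝ) (hx : x ≠ 0) (y : E) :
    fderiv ℝ (inverseSquareField c) x y =
      (c * (‖x‖ ^ 3)⁻¹) • y + (-3 * c * ⟪x, y⟫ * (‖x‖ ^ 5)⁻¹) • x := by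
  rw [(hasFDerivAt_inverseSquareField c hx).fderiv]
  simp only [add_apply, smul_apply, ContinuousLinearMap.id_apply,
    ContinuousLinearMap.smulRight_apply, coe_innerSL_apply, smul_eq_mul]
  module

theorem hasFDerivAt_fderiv_inverseSquareField_apply (c : ℝ) (y : E) (hx : x ≠ 0) :
    HasFDerivAt (fun w => fderiv ℝ (inverseSquareField c) w y)
      (c • ((-3 * (‖x‖ ^ 5)⁻¹) • ((innerSL ℝ y).smulRight x + (innerSL ℝ x).smulRight y +
          ⟪x, y⟫ • ContinuousLinearMap.id ℝ E) +
        ((15 * ⟪x, y⟫ * (‖x‖ ^ 7)⁻¹) • innerSL ℝ x).smulRight x)) x := by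
  have hloc : (fun w => fderiv ℝ (inverseSquareField c) w y) =ᶠ[𝓝 x]
      fun w => (c * (‖w‖ ^ 3)⁻¹) • y + (-3 * c * ⟪w, y⟫ * (‖w‖ ^ 5)⁻¹) • w :=
    (eventually_ne_nhds hx).mono fun w hw => fderiv_inverseSquareField_apply c hw y
  have hinner : HasFDerivAt (fun w : E => ⟪w, y⟫) (innerSL ℝ y) x := by
    convert (innerSL ℝ y).hasFDerivAt using 1
    ext w
    exact real_inner_comm y w
  have h := (((hasFDerivAt_inv_norm_pow 3 hx).const_mul c).smul_const y).add
    ((((hinner.const_mul (-3 * c)).mul (hasFDerivAt_inv_norm_pow 5 hx))).smul (hasFDerivAt_id x))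
  refine (h.congr_fderiv ?_).congr_of_eventuallyEq hloc
  ext z
  simp only [add_apply, smul_apply, ContinuousLinearMap.id_apply, Pi.mul_apply, id_eq,
    Nat.cast_ofNat, ContinuousLinearMap.smulRight_apply, coe_innerSL_apply, smul_eq_mul]
  module

/-- **Third derivative (quadrupole kernel) of the Laplace Green's function.** For the
gradient field `F x = (4π)⁻¹ * ‖x‖⁻³ • x` of the Laplace Green's function on `ℝ³`,
a fixed `y`, and `x ≠ 0`, the map `x ↦ (fderiv ℝ F x) y` is differentiable at `x`, and
its derivative applied to `z` equals
`(4π)⁻¹ • (−3‖x‖⁻⁵ • (⟪y,z⟫ • x + ⟪x,z⟫ • y + ⟪x,y⟫ • z) + (15 ⟪x,y⟫ ⟪x,z⟫ ‖x‖⁻⁷) • x)`. -/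
theorem stmt_10 (F : EuclideanSpace ℝ (Fin 3) → EuclideanSpace ℝ (Fin 3))
    (hF : ∀ x, F x = ((4 * Real.pi)⁻¹ * (‖x‖ ^ 3)⁻¹) • x)
    (y : EuclideanSpace ℝ (Fin 3))
    (x : EuclideanSpace ℝ (Fin 3)) (hx : x ≠ 0) :
    DifferentiableAt ℝ (fun w => (fderiv ℝ F w) y) x ∧
    ∀ z : EuclideanSpace ℝ (Fin 3),
      (fderiv ℝ (fun w => (fderiv ℝ F w) y) x) z =
        (4 * Real.pi)⁻¹ •
          ((-3 * (‖x‖ ^ 5)⁻¹) •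
              ((inner ℝ y z : ℝ) • x + (inner ℝ x z : ℝ) • y + (inner ℝ x y : ℝ) • z) +
            (15 * (inner ℝ x y : ℝ) * (inner ℝ x z : ℝ) * (‖x‖ ^ 7)⁻¹) • x) := by
  obtain rfl : F = inverseSquareField (4 * Real.pi)⁻¹ := funext hF
  have h := hasFDerivAt_fderiv_inverseSquareField_apply (4 * Real.pi)⁻¹ y hx
  refine ⟨h.differentiableAt, fun z => ?_⟩
  rw [h.fderiv]
  simp only [smul_apply, add_apply, ContinuousLinearMap.smulRight_apply,
    ContinuousLinearMap.id_apply, coe_innerSL_apply, smul_eq_mul]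
  module
end

section
/- Let p, q ∈ ℝ³ (Fin 3 → ℝ), let r(t) = p + t•(q−p) be the affine parameterization of the line segment from p to q, and let r̃ = (1/2)•(p+q) be its midpoint. Then the quadrupole moment of the segment about its midpoint satisfies: for all coordinate indices i, j, k ∈ Fin 3, ∫_{t ∈ (0,1)} (q−p) i · (r(t) − r̃) j · (r(t) − r̃) k dt = (1/12) · (q−p) i · (q−p) j · (q−p) k. -/
/-- **The quadrupole moment of a line segment about its midpoint.** For the segment
`r t = p + t • (q - p)` with midpoint `r̃ = (1/2) • (p + q)`, and any coordinate indices
`i, j, k`, we have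
`∫ t in (0,1), (q-p) i * (r t - r̃) j * (r t - r̃) k = (1/12) * (q-p) i * (q-p) j * (q-p) k`. -/
theorem stmt_12 (p q : Fin 3 → ℝ)
    (r : ℝ → (Fin 3 → ℝ)) (hr : ∀ t, r t = p + t • (q - p))
    (rmid : Fin 3 → ℝ) (hrmid : rmid = (1 / 2 : ℝ) • (p + q))
    (i j k : Fin 3) :
    ∫ t in (0:ℝ)..1, (q - p) i * (r t - rmid) j * (r t - rmid) k =
      (1 / 12 : ℝ) * (q - p) i * (q - p) j * (q - p) k := by
  have h : ∀ t : ℝ, (q - p) i * (r t - rmid) j * (r t - rmid) k =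
      ((q - p) i * (q - p) j * (q - p) k) * (t - 1/2)^2 := by
    intro t
    simp only [hr t, hrmid, Pi.sub_apply, Pi.add_apply, Pi.smul_apply, smul_eq_mul]
    ring
  simp only [h]
  rw [intervalIntegral.integral_const_mul]
  have : ∫ t in (0:ℝ)..1, (t - 1/2)^2 = 1/12 := by
    have := intervalIntegral.integral_comp_sub_right (a := (0:ℝ)) (b := 1)
      (f := fun t => t^2) (1/2)
    rw [this]
    norm_num
  rw [this]
  ring
end

section
/- Let L ≥ 4 be a natural number. For indices in ZMod L, say that the loop with index k 'uses' the curves with indices k and k+1, and say two loops with indices k and l are 'disjoint' if {k, k+1} ∩ {l, l+1} = ∅ as subsets of ZMod L. Then for any two distinct curve indices i, j ∈ ZMod L, there exist loop indices k, l ∈ ZMod L such that the loop k uses curve i (i.e., i = k or i = k+1), the loop l uses curve j (i.e., j = l or j = l+1), and the loops k and l are disjoint ({k, k+1} ∩ {l, l+1} = ∅). -/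
lemma aux_pair_disj {L : ℕ} (a b : ZMod L) (h1 : a ≠ b) (h2 : a ≠ b + 1)
    (h3 : a + 1 ≠ b) (h4 : a + 1 ≠ b + 1) :
    ({a, a + 1} : Set (ZMod L)) ∩ ({b, b + 1} : Set (ZMod L)) = ∅ := by
  ext x
  simp only [Set.mem_inter_iff, Set.mem_insert_iff, Set.mem_singleton_iff,
    Set.mem_empty_iff_false, iff_false]
  rintro ⟨h | h, h' | h'⟩ <;> subst h <;> tauto

lemma aux_cast_ne {L : ℕ} (hL : 4 ≤ L) (n : ℕ) (hn : 0 < n) (hn' : n < 4) :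
    (n : ZMod L) ≠ 0 := by
  rw [Ne, ZMod.natCast_eq_zero_iff]
  intro h
  have := Nat.le_of_dvd hn h
  omega

/-- **Separating loops exist in the braid verification procedure.** For `L ≥ 4` virtual
closed loops over `ZMod L`, where the loop with index `k` uses the curves with indices
`k` and `k + 1`, any two distinct curve indices `i ≠ j` are used by two loops `k`, `l`
that are disjoint (share no curve): `{k, k+1} ∩ {l, l+1} = ∅`. -/
theorem stmt_17 (L : ℕ) (hL : 4 ≤ L) (i j : ZMod L) (hij : i ≠ j) :
    ∃ k l : ZMod L,
      (i = k ∨ i = k + 1) ∧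
      (j = l ∨ j = l + 1) ∧
      ({k, k + 1} : Set (ZMod L)) ∩ ({l, l + 1} : Set (ZMod L)) = ∅ := by
  have h1' : (1 : ZMod L) ≠ 0 := by
    have := aux_cast_ne hL 1 (by omega) (by omega); simpa using this
  have h2' : (2 : ZMod L) ≠ 0 := by
    have := aux_cast_ne hL 2 (by omega) (by omega); simpa using this
  have h3' : (3 : ZMod L) ≠ 0 := by
    have := aux_cast_ne hL 3 (by omega) (by omega); simpa using this
  by_cases hj : j = i + 1
  · subst hj
    refine ⟨i - 1, i + 1, Or.inr (by ring), Or.inl rfl, aux_pair_disj _ _ ?_ ?_ ?_ ?_⟩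
    · intro h; exact h2' (by linear_combination -h)
    · intro h; exact h3' (by linear_combination -h)
    · intro h; exact h1' (by linear_combination -h)
    · intro h; exact h2' (by linear_combination -h)
  · by_cases hi : i = j + 1
    · subst hi
      refine ⟨j + 1, j - 1, Or.inl rfl, Or.inr (by ring), aux_pair_disj _ _ ?_ ?_ ?_ ?_⟩
      · intro h; exact h2' (by linear_combination h)
      · intro h; exact h1' (by linear_combination h)
      · intro h; exact h3' (by linear_combination h)
      · intro h; exact h2' (by linear_combination h)
    · refine ⟨i, j, Or.inl rfl, Or.inl rfl, aux_pair_disj _ _ hij hi ?_ ?_⟩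
      · intro h; exact hj h.symm
      · intro h; exact hij (by linear_combination h)
end
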